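/- Let Z be a finite nonempty set, let p and q be probability distributions on Z with p(z) ≥ c and q(z) ≥ c for all z, where c ∈ (0,1]. Let G be a finite nonempty set of functions g : Z → [−1/c, 1/c] containing the true ratio r(z) = p(z)/q(z). Let N ≥ 1, let x_1,…,x_N be i.i.d. with law q and y_1,…,y_N be i.i.d. with law p, with all 2N samples mutually independent, and let ĝ be a minimizer over g ∈ G of the empirical objective (1/N)·∑_{i=1}^N g(x_i)² − (2/N)·∑_{i=1}^N g(y_i). Then, for every δ ∈ (0,1), with probability at least 1 − δ, the estimation risk satisfies ∑_{z∈Z} q(z)·|ĝ(z) − r(z)| ≤ (2/c)·√(log(2·|G|/δ))·N^{−1/4}. -/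

import Mathlib

open scoped Classical



/-- Weak Hoeffding/mgf bound for a mean-zero bounded finite random variable. -/
lemma dre_mgf_aux {Z : Type*} [Fintype Z] (μ W : Z → ℝ) (ρ t : ℝ)
    (hμ0 : ∀ z, 0 ≤ μ z) (hμ1 : ∑ z, μ z = 1)
    (hρ : 0 < ρ) (hW : ∀ z, |W z| ≤ ρ) (hmean : ∑ z, μ z * W z = 0) :
    ∑ z, μ z * Real.exp (t * W z) ≤ Real.exp (t ^ 2 * ρ ^ 2 / 2) := by
  have key : ∀ z, Real.exp (t * W z) ≤
      Real.cosh (t * ρ) + (W z / ρ) * Real.sinh (t * ρ) := by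
    intro z
    have h1 := (abs_le.mp (hW z)).1
    have h2 := (abs_le.mp (hW z)).2
    have ha : (0:ℝ) ≤ (ρ - W z) / (2 * ρ) := by
      apply div_nonneg <;> linarith
    have hb : (0:ℝ) ≤ (ρ + W z) / (2 * ρ) := by
      apply div_nonneg <;> linarith
    have hab : (ρ - W z) / (2 * ρ) + (ρ + W z) / (2 * ρ) = 1 := by
      field_simp
      ring
    have hcx := convexOn_exp.2 (Set.mem_univ (-(t * ρ))) (Set.mem_univ (t * ρ)) ha hb hab
    simp only [smul_eq_mul] at hcx
    have harg : (ρ - W z) / (2 * ρ) * (-(t * ρ)) + (ρ + W z) / (2 * ρ) * (t * ρ)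
        = t * W z := by field_simp; ring
    rw [harg] at hcx
    refine hcx.trans (le_of_eq ?_)
    rw [Real.cosh_eq, Real.sinh_eq]
    field_simp
    ring
  calc ∑ z, μ z * Real.exp (t * W z)
      ≤ ∑ z, (μ z * Real.cosh (t * ρ) + (μ z * W z) * (Real.sinh (t * ρ) / ρ)) := by
        apply Finset.sum_le_sum
        intro z _
        have := key z
        have hμ := hμ0 z
        have : μ z * Real.exp (t * W z) ≤ μ z * (Real.cosh (t * ρ) + (W z / ρ) * Real.sinh (t * ρ)) :=
          mul_le_mul_of_nonneg_left (key z) hμ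
        refine this.trans (le_of_eq ?_)
        field_simp
    _ = Real.cosh (t * ρ) := by
        rw [Finset.sum_add_distrib, ← Finset.sum_mul, ← Finset.sum_mul, hμ1, hmean]
        ring
    _ ≤ Real.exp ((t * ρ) ^ 2 / 2) := Real.cosh_le_exp_half_sq _
    _ = Real.exp (t ^ 2 * ρ ^ 2 / 2) := by ring_nf

/-- Product-of-sums factorization over the 2N-fold product space. -/
lemma dre_prod_aux {Z : Type*} [Fintype Z] (N : ℕ) (F H : Z → ℝ) :
    ∑ ω : (Fin N → Z) × (Fin N → Z), (∏ i, F (ω.1 i)) * (∏ i, H (ω.2 i))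
      = (∑ x, F x) ^ N * (∑ y, H y) ^ N := by
  rw [Fintype.sum_prod_type, Fintype.sum_pow, Fintype.sum_pow, Finset.sum_mul_sum]

/-- One-sided Chernoff bound for the 2N-fold product measure. -/
lemma dre_chernoff_aux {Z : Type*} [Fintype Z] (N : ℕ) (q p U V : Z → ℝ)
    (mU mV ρU ρV lam : ℝ)
    (hq0 : ∀ z, 0 ≤ q z) (hp0 : ∀ z, 0 ≤ p z)
    (hqs : ∑ z, q z = 1) (hps : ∑ z, p z = 1)
    (hmU : ∑ z, q z * U z = mU) (hmV : ∑ z, p z * V z = mV)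
    (hρU : 0 < ρU) (hρV : 0 < ρV)
    (hU : ∀ z, |U z - mU| ≤ ρU) (hV : ∀ z, |V z - mV| ≤ ρV) (hlam : 0 ≤ lam) :
    ∑ ω : (Fin N → Z) × (Fin N → Z),
        (if (∑ i, U (ω.1 i)) - (∑ i, V (ω.2 i)) ≤ 0
         then (∏ i, q (ω.1 i)) * (∏ i, p (ω.2 i)) else 0)
      ≤ Real.exp ((N : ℝ) * (-(lam * (mU - mV)) + lam ^ 2 * (ρU ^ 2 + ρV ^ 2) / 2)) := by
  set F : Z → ℝ := fun x => q x * Real.exp (lam * (mU - U x)) with hF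
  set H : Z → ℝ := fun y => p y * Real.exp (lam * (V y - mV)) with hH
  have hC : (0:ℝ) < Real.exp (-(lam * (N : ℝ) * (mU - mV))) := Real.exp_pos _
  -- pointwise bound
  have hpt : ∀ ω : (Fin N → Z) × (Fin N → Z),
      (if (∑ i, U (ω.1 i)) - (∑ i, V (ω.2 i)) ≤ 0
       then (∏ i, q (ω.1 i)) * (∏ i, p (ω.2 i)) else 0)
      ≤ ((∏ i, F (ω.1 i)) * (∏ i, H (ω.2 i))) * Real.exp (-(lam * (N : ℝ) * (mU - mV))) := by
    intro ω
    have hw0 : (0:ℝ) ≤ (∏ i, q (ω.1 i)) * (∏ i, p (ω.2 i)) :=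
      mul_nonneg (Finset.prod_nonneg fun i _ => hq0 _) (Finset.prod_nonneg fun i _ => hp0 _)
    have hexpand : ((∏ i, F (ω.1 i)) * (∏ i, H (ω.2 i))) * Real.exp (-(lam * (N : ℝ) * (mU - mV)))
        = ((∏ i, q (ω.1 i)) * (∏ i, p (ω.2 i))) *
          Real.exp (lam * ((∑ i, V (ω.2 i)) - (∑ i, U (ω.1 i)))) := by
      simp only [hF, hH, Finset.prod_mul_distrib, ← Real.exp_sum]
      rw [mul_mul_mul_comm, mul_assoc, ← Real.exp_add, ← Real.exp_add]
      congr 1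
      have e1 : ∑ x : Fin N, lam * (mU - U (ω.1 x))
          = (N : ℝ) * (lam * mU) - lam * ∑ i, U (ω.1 i) := by
        simp [mul_sub, Finset.sum_sub_distrib, Finset.sum_const, Finset.card_univ,
          ← Finset.mul_sum]
      have e2 : ∑ x : Fin N, lam * (V (ω.2 x) - mV)
          = lam * ∑ i, V (ω.2 i) - (N : ℝ) * (lam * mV) := by
        simp [mul_sub, Finset.sum_sub_distrib, Finset.sum_const, Finset.card_univ,
          ← Finset.mul_sum]
      rw [e1, e2]
      ring
    rw [hexpand]
    split_ifs with hcond
    · apply le_mul_of_one_le_right hw0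
      rw [Real.one_le_exp_iff]
      exact mul_nonneg hlam (by linarith)
    · exact mul_nonneg hw0 (Real.exp_pos _).le
  calc ∑ ω : (Fin N → Z) × (Fin N → Z),
        (if (∑ i, U (ω.1 i)) - (∑ i, V (ω.2 i)) ≤ 0
         then (∏ i, q (ω.1 i)) * (∏ i, p (ω.2 i)) else 0)
      ≤ ∑ ω : (Fin N → Z) × (Fin N → Z),
          ((∏ i, F (ω.1 i)) * (∏ i, H (ω.2 i))) * Real.exp (-(lam * (N : ℝ) * (mU - mV))) :=
        Finset.sum_le_sum fun ω _ => hpt ω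
    _ = ((∑ x, F x) ^ N * (∑ y, H y) ^ N) * Real.exp (-(lam * (N : ℝ) * (mU - mV))) := by
        rw [← Finset.sum_mul, dre_prod_aux]
    _ ≤ (Real.exp (lam ^ 2 * ρU ^ 2 / 2) ^ N * Real.exp (lam ^ 2 * ρV ^ 2 / 2) ^ N) *
          Real.exp (-(lam * (N : ℝ) * (mU - mV))) := by
        have hFb : ∑ x, F x ≤ Real.exp (lam ^ 2 * ρU ^ 2 / 2) := by
          apply dre_mgf_aux q (fun x => mU - U x) ρU lam hq0 hqs hρU
          · intro z; rw [abs_sub_comm] at *; exact hU z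
          · simp only [mul_sub, Finset.sum_sub_distrib, hmU]
            rw [← Finset.sum_mul, hqs, one_mul, sub_self]
        have hHb : ∑ y, H y ≤ Real.exp (lam ^ 2 * ρV ^ 2 / 2) := by
          apply dre_mgf_aux p (fun y => V y - mV) ρV lam hp0 hps hρV hV
          simp only [mul_sub, Finset.sum_sub_distrib, hmV]
          rw [← Finset.sum_mul, hps, one_mul, sub_self]
        have hF0 : (0:ℝ) ≤ ∑ x, F x :=
          Finset.sum_nonneg fun x _ => mul_nonneg (hq0 x) (Real.exp_pos _).le
        have hH0 : (0:ℝ) ≤ ∑ y, H y :=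
          Finset.sum_nonneg fun y _ => mul_nonneg (hp0 y) (Real.exp_pos _).le
        apply mul_le_mul_of_nonneg_right _ hC.le
        exact mul_le_mul (pow_le_pow_left₀ hF0 hFb N) (pow_le_pow_left₀ hH0 hHb N)
          (pow_nonneg hH0 N) (pow_nonneg (Real.exp_pos _).le N)
    _ = Real.exp ((N : ℝ) * (-(lam * (mU - mV)) + lam ^ 2 * (ρU ^ 2 + ρV ^ 2) / 2)) := by
        rw [← Real.exp_nat_mul, ← Real.exp_nat_mul, ← Real.exp_add, ← Real.exp_add]
        ring_nf

set_option maxHeartbeats 2000000 in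
/-- **Finite-sample guarantee for the least-squares density ratio estimator.** With `x_i`
i.i.d. from `q` and `y_i` i.i.d. from `p` (all independent), if `ĝ` minimizes the
empirical objective `(1/N)·∑ᵢ g(xᵢ)² − (2/N)·∑ᵢ g(yᵢ)` over a realizable class `G`
(containing the true ratio `r = p/q`) of functions bounded by `1/c`, then with
probability at least `1 − δ`, `E_{z∼q} |ĝ(z) − r(z)| ≤ (2/c)·√(log(2·|G|/δ))·N^{−1/4}`. -/
theorem dre_finite_sample_guarantee
    {Z : Type*} [Fintype Z] [Nonempty Z]
    (c : ℝ) (hc0 : 0 < c) (hc1 : c ≤ 1)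
    (p q : Z → ℝ)
    (hp : ∀ z, c ≤ p z) (hpsum : ∑ z, p z = 1)
    (hq : ∀ z, c ≤ q z) (hqsum : ∑ z, q z = 1)
    (G : Finset (Z → ℝ)) (hGne : G.Nonempty)
    (hGbd : ∀ g ∈ G, ∀ z, |g z| ≤ 1 / c)
    (hreal : (fun z => p z / q z) ∈ G)
    (N : ℕ) (hN : 1 ≤ N)
    (ghat : (Fin N → Z) × (Fin N → Z) → Z → ℝ)
    (hghatmem : ∀ ω, ghat ω ∈ G)
    (hghatmin : ∀ ω, ∀ g ∈ G,
      (1 / (N : ℝ)) * (∑ i : Fin N, (ghat ω (ω.1 i)) ^ 2) -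
          (2 / (N : ℝ)) * (∑ i : Fin N, ghat ω (ω.2 i)) ≤
        (1 / (N : ℝ)) * (∑ i : Fin N, (g (ω.1 i)) ^ 2) -
          (2 / (N : ℝ)) * (∑ i : Fin N, g (ω.2 i)))
    (δ : ℝ) (hδ0 : 0 < δ) (hδ1 : δ < 1) :
    1 - δ ≤
      ∑ ω : (Fin N → Z) × (Fin N → Z),
        if (∑ z : Z, q z * |ghat ω z - p z / q z| ≤
              (2 / c) * Real.sqrt (Real.log (2 * G.card / δ)) * (N : ℝ) ^ (-(1/4) : ℝ))
        then (∏ i : Fin N, q (ω.1 i)) * (∏ i : Fin N, p (ω.2 i))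
        else 0 := by
  -- basic positivity facts
  have hq0 : ∀ z, (0:ℝ) < q z := fun z => lt_of_lt_of_le hc0 (hq z)
  have hp0 : ∀ z, (0:ℝ) < p z := fun z => lt_of_lt_of_le hc0 (hp z)
  set r : Z → ℝ := fun z => p z / q z with hr
  have hrz : ∀ z, r z = p z / q z := fun _ => rfl
  have hqr : ∀ z, q z * r z = p z := fun z => by
    rw [hrz, mul_comm, div_mul_cancel₀ _ (ne_of_gt (hq0 z))]
  have hrbd : ∀ z, |r z| ≤ 1 / c := hGbd _ hreal
  have hN0 : (0:ℝ) < N := by exact_mod_cast hN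
  have hG1 : (1:ℝ) ≤ G.card := by exact_mod_cast Finset.card_pos.mpr hGne
  have hGc0 : (0:ℝ) < G.card := lt_of_lt_of_le one_pos hG1
  set L : ℝ := Real.log (2 * G.card / δ) with hL
  have hLlog2 : Real.log 2 ≤ L := by
    apply Real.log_le_log (by norm_num)
    rw [le_div_iff₀ hδ0]
    have : (2:ℝ) * δ ≤ 2 := by linarith
    linarith
  have hlog2 : (0.6931471803 : ℝ) < Real.log 2 := Real.log_two_gt_d9
  have hL0 : 0 < L := lt_of_lt_of_le (by linarith) hLlog2
  set t : ℝ := (N : ℝ) ^ (-(1/4) : ℝ) with htdef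
  have ht0 : 0 < t := Real.rpow_pos_of_pos hN0 _
  have ht4 : (N : ℝ) * (t ^ 2) ^ 2 = 1 := by
    rw [htdef, ← Real.rpow_natCast ((N:ℝ) ^ (-(1/4):ℝ)) 2, ← Real.rpow_mul hN0.le,
      ← Real.rpow_natCast ((N:ℝ) ^ (-(1/4) * (2:ℕ):ℝ)) 2, ← Real.rpow_mul hN0.le]
    norm_num
    rw [Real.rpow_neg_one]
    field_simp
  set B : ℝ := 2 / c * Real.sqrt L * t with hB
  have hB0 : 0 < B := by
    apply mul_pos (mul_pos (by positivity) _) ht0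
    exact Real.sqrt_pos.mpr hL0
  have hB2 : B ^ 2 = 4 / c ^ 2 * L * t ^ 2 := by
    rw [hB, mul_pow, mul_pow, Real.sq_sqrt hL0.le]
    ring
  -- total mass is one
  have hmass : ∑ ω : (Fin N → Z) × (Fin N → Z),
      (∏ i, q (ω.1 i)) * (∏ i, p (ω.2 i)) = 1 := by
    rw [dre_prod_aux, hqsum, hpsum]
    norm_num
  have hw0 : ∀ ω : (Fin N → Z) × (Fin N → Z),
      (0:ℝ) ≤ (∏ i, q (ω.1 i)) * (∏ i, p (ω.2 i)) := fun ω =>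
    mul_nonneg (Finset.prod_nonneg fun i _ => (hq0 _).le)
      (Finset.prod_nonneg fun i _ => (hp0 _).le)
  -- the excess-loss statistics
  set U : (Z → ℝ) → Z → ℝ := fun g x => g x ^ 2 - r x ^ 2 with hU
  set V : (Z → ℝ) → Z → ℝ := fun g y => 2 * (g y - r y) with hV
  set s : (Z → ℝ) → ℝ := fun g => ∑ z, q z * (g z - r z) ^ 2 with hs
  have hUz : ∀ g x, U g x = g x ^ 2 - r x ^ 2 := fun _ _ => rfl
  have hVz : ∀ g y, V g y = 2 * (g y - r y) := fun _ _ => rfl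
  -- mean identity
  have hmean : ∀ g, (∑ z, q z * U g z) - (∑ z, p z * V g z) = s g := by
    intro g
    rw [hs, ← Finset.sum_sub_distrib]
    apply Finset.sum_congr rfl
    intro z _
    rw [← hqr z, hUz, hVz]
    ring
  -- minimality implies nonpositive empirical excess loss
  have hTmin : ∀ ω : (Fin N → Z) × (Fin N → Z),
      (∑ i, U (ghat ω) (ω.1 i)) - (∑ i, V (ghat ω) (ω.2 i)) ≤ 0 := by
    intro ω
    have h := hghatmin ω _ hreal
    have h2 : (∑ i, (ghat ω (ω.1 i)) ^ 2) - 2 * (∑ i, ghat ω (ω.2 i)) ≤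
        (∑ i, (r (ω.1 i)) ^ 2) - 2 * (∑ i, r (ω.2 i)) := by
      have h3 := mul_le_mul_of_nonneg_left h hN0.le
      have e : ∀ A D : ℝ, (N:ℝ) * ((1 / (N:ℝ)) * A - (2 / (N:ℝ)) * D) = A - 2 * D := by
        intro A D; field_simp
      rw [e, e] at h3
      exact h3
    have e1 : ∑ i, U (ghat ω) (ω.1 i)
        = (∑ i, (ghat ω (ω.1 i)) ^ 2) - ∑ i, (r (ω.1 i)) ^ 2 := by
      simp [hUz, Finset.sum_sub_distrib]
    have e2 : ∑ i, V (ghat ω) (ω.2 i)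
        = 2 * (∑ i, ghat ω (ω.2 i)) - 2 * ∑ i, r (ω.2 i) := by
      simp [hVz, Finset.sum_sub_distrib, mul_sub, Finset.mul_sum]
    rw [e1, e2]
    linarith
  -- Cauchy–Schwarz: small s implies small risk
  have hCS : ∀ ω : (Fin N → Z) × (Fin N → Z), s (ghat ω) ≤ B ^ 2 →
      ∑ z : Z, q z * |ghat ω z - r z| ≤ B := by
    intro ω hsB
    have h2 := Finset.sum_mul_sq_le_sq_mul_sq Finset.univ
      (fun z => Real.sqrt (q z)) (fun z => Real.sqrt (q z) * |ghat ω z - r z|)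
    have h1 : (∑ z : Z, q z * |ghat ω z - r z|) ^ 2 ≤
        (∑ z : Z, q z) * (∑ z, q z * (ghat ω z - r z) ^ 2) := by
      calc (∑ z : Z, q z * |ghat ω z - r z|) ^ 2
          = (∑ z : Z, Real.sqrt (q z) * (Real.sqrt (q z) * |ghat ω z - r z|)) ^ 2 := by
            congr 1
            refine Finset.sum_congr rfl fun z _ => ?_
            rw [← mul_assoc, Real.mul_self_sqrt (hq0 z).le]
        _ ≤ (∑ z : Z, Real.sqrt (q z) ^ 2) *
              (∑ z : Z, (Real.sqrt (q z) * |ghat ω z - r z|) ^ 2) := h2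
        _ = (∑ z : Z, q z) * (∑ z, q z * (ghat ω z - r z) ^ 2) := by
            congr 1
            · exact Finset.sum_congr rfl fun z _ => Real.sq_sqrt (hq0 z).le
            · refine Finset.sum_congr rfl fun z _ => ?_
              rw [mul_pow, Real.sq_sqrt (hq0 z).le, sq_abs]
    rw [hqsum, one_mul] at h1
    have h4 : (∑ z : Z, q z * |ghat ω z - r z|) ^ 2 ≤ B ^ 2 := le_trans h1 hsB
    have h5 : (0:ℝ) ≤ ∑ z : Z, q z * |ghat ω z - r z| :=
      Finset.sum_nonneg fun z _ => mul_nonneg (hq0 z).le (abs_nonneg _)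
    have h6 := Real.sqrt_le_sqrt h4
    rwa [Real.sqrt_sq h5, Real.sqrt_sq hB0.le] at h6
  have hcond_eq : ∀ ω : (Fin N → Z) × (Fin N → Z),
      (∑ z : Z, q z * |ghat ω z - p z / q z|) = ∑ z : Z, q z * |ghat ω z - r z| := by
    intro ω
    exact Finset.sum_congr rfl fun z _ => by rw [hrz]
  -- case split on the size of Z
  rcases eq_or_lt_of_le (Nat.succ_le_of_lt Fintype.card_pos : 1 ≤ Fintype.card Z) with hcard | hcard
  · -- |Z| = 1 : the estimator is exact
    obtain ⟨z0, hz0⟩ := Fintype.card_eq_one_iff.mp hcard.symm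
    have huniv : (Finset.univ : Finset Z) = {z0} := by
      ext z; simp [hz0 z]
    have hq1 : q z0 = 1 := by rw [← hqsum, huniv, Finset.sum_singleton]
    have hp1 : p z0 = 1 := by rw [← hpsum, huniv, Finset.sum_singleton]
    have hr1 : r z0 = 1 := by rw [hrz, hp1, hq1]; norm_num
    have hghat1 : ∀ ω : (Fin N → Z) × (Fin N → Z), ghat ω z0 = 1 := by
      intro ω
      have h := hTmin ω
      have e : ∀ i : Fin N, ω.1 i = z0 := fun i => hz0 _
      have e2 : ∀ i : Fin N, ω.2 i = z0 := fun i => hz0 _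
      have eU : ∀ i : Fin N, U (ghat ω) (ω.1 i) = ghat ω z0 ^ 2 - 1 := by
        intro i; rw [hUz, e i, hr1]; norm_num
      have eV : ∀ i : Fin N, V (ghat ω) (ω.2 i) = 2 * (ghat ω z0 - 1) := by
        intro i; rw [hVz, e2 i, hr1]
      rw [Finset.sum_congr rfl fun i _ => eU i, Finset.sum_congr rfl fun i _ => eV i,
        Finset.sum_const, Finset.sum_const, Finset.card_univ, Fintype.card_fin,
        nsmul_eq_mul, nsmul_eq_mul] at h
      have e3 : (N:ℝ) * (ghat ω z0 - 1) ^ 2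
          = (N:ℝ) * (ghat ω z0 ^ 2 - 1) - (N:ℝ) * (2 * (ghat ω z0 - 1)) := by ring
      have h4 : (N:ℝ) * (ghat ω z0 - 1) ^ 2 ≤ (N:ℝ) * 0 := by
        rw [mul_zero, e3]; exact h
      have h5 : (ghat ω z0 - 1) ^ 2 ≤ 0 := le_of_mul_le_mul_left h4 hN0
      have h6 : ghat ω z0 - 1 = 0 :=
        sq_eq_zero_iff.mp (le_antisymm h5 (sq_nonneg _))
      linarith
    have hcond : ∀ ω : (Fin N → Z) × (Fin N → Z),
        ∑ z : Z, q z * |ghat ω z - p z / q z| ≤ B := by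
      intro ω
      have hz : ∑ z : Z, q z * |ghat ω z - p z / q z| = 0 := by
        rw [huniv, Finset.sum_singleton, hghat1, hp1, hq1]
        norm_num
      rw [hz]
      exact hB0.le
    calc (1:ℝ) - δ ≤ 1 := by linarith
      _ = ∑ ω : (Fin N → Z) × (Fin N → Z), (∏ i, q (ω.1 i)) * (∏ i, p (ω.2 i)) := hmass.symm
      _ ≤ _ := by
          apply Finset.sum_le_sum
          intro ω _
          rw [if_pos (hcond ω)]
  · -- |Z| ≥ 2, hence c ≤ 1/2
    have hc12 : c ≤ 1 / 2 := by
      have h2 : (2:ℝ) * c ≤ ∑ z, q z := by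
        calc (2:ℝ) * c ≤ (Fintype.card Z : ℝ) * c := by
              have h22 : (2:ℝ) ≤ Fintype.card Z := by exact_mod_cast hcard
              exact mul_le_mul_of_nonneg_right h22 hc0.le
          _ ≤ ∑ z, q z := by
              rw [← Finset.card_univ, ← nsmul_eq_mul]
              exact Finset.card_nsmul_le_sum _ _ _ fun z _ => hq z
      rw [hqsum] at h2
      linarith
    set R : ℝ := (2 / c ^ 2) ^ 2 + (8 / c) ^ 2 with hRdef
    have hR0 : 0 < R := by positivity
    set lam : ℝ := B ^ 2 / R with hlam
    have hlam0 : 0 < lam := by positivity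
    -- per-g Chernoff bound
    have hPg : ∀ g ∈ G, B ^ 2 < s g →
        (∑ ω : (Fin N → Z) × (Fin N → Z),
          if (∑ i, U g (ω.1 i)) - (∑ i, V g (ω.2 i)) ≤ 0
          then (∏ i, q (ω.1 i)) * (∏ i, p (ω.2 i)) else 0) ≤ δ / G.card := by
      intro g hg hsg
      have hgbd := hGbd g hg
      set mU : ℝ := ∑ z, q z * U g z with hmU
      set mV : ℝ := ∑ z, p z * V g z with hmV
      have hUbd : ∀ z, |U g z| ≤ 1 / c ^ 2 := by
        intro z
        have h1 : g z ^ 2 ≤ 1 / c ^ 2 := by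
          rw [← sq_abs]
          calc |g z| ^ 2 ≤ (1 / c) ^ 2 := pow_le_pow_left₀ (abs_nonneg _) (hgbd z) 2
            _ = 1 / c ^ 2 := by rw [div_pow, one_pow]
        have h2 : r z ^ 2 ≤ 1 / c ^ 2 := by
          rw [← sq_abs]
          calc |r z| ^ 2 ≤ (1 / c) ^ 2 := pow_le_pow_left₀ (abs_nonneg _) (hrbd z) 2
            _ = 1 / c ^ 2 := by rw [div_pow, one_pow]
        rw [hUz, abs_le]
        constructor
        · linarith [sq_nonneg (g z)]
        · linarith [sq_nonneg (r z)]
      have hmUbd : |mU| ≤ 1 / c ^ 2 := by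
        rw [hmU]
        calc |∑ z, q z * U g z| ≤ ∑ z, |q z * U g z| := Finset.abs_sum_le_sum_abs _ _
          _ ≤ ∑ z, q z * (1 / c ^ 2) := by
              refine Finset.sum_le_sum fun z _ => ?_
              rw [abs_mul, abs_of_nonneg (hq0 z).le]
              exact mul_le_mul_of_nonneg_left (hUbd z) (hq0 z).le
          _ = 1 / c ^ 2 := by rw [← Finset.sum_mul, hqsum, one_mul]
      have hVbd : ∀ z, |V g z| ≤ 4 / c := by
        intro z
        have h1 : |g z - r z| ≤ 2 / c := by
          calc |g z - r z| ≤ |g z| + |r z| := abs_sub _ _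
            _ ≤ 1 / c + 1 / c := add_le_add (hgbd z) (hrbd z)
            _ = 2 / c := by ring
        calc |V g z| = 2 * |g z - r z| := by rw [hVz, abs_mul, abs_two]
          _ ≤ 2 * (2 / c) := mul_le_mul_of_nonneg_left h1 (by norm_num)
          _ = 4 / c := by ring
      have hmVbd : |mV| ≤ 4 / c := by
        rw [hmV]
        calc |∑ z, p z * V g z| ≤ ∑ z, |p z * V g z| := Finset.abs_sum_le_sum_abs _ _
          _ ≤ ∑ z, p z * (4 / c) := by
              refine Finset.sum_le_sum fun z _ => ?_
              rw [abs_mul, abs_of_nonneg (hp0 z).le]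
              exact mul_le_mul_of_nonneg_left (hVbd z) (hp0 z).le
          _ = 4 / c := by rw [← Finset.sum_mul, hpsum, one_mul]
      have hch := dre_chernoff_aux N q p (U g) (V g) mU mV (2 / c ^ 2) (8 / c) lam
        (fun z => (hq0 z).le) (fun z => (hp0 z).le) hqsum hpsum hmU.symm hmV.symm
        (by positivity) (by positivity)
        (fun z => by
          calc |U g z - mU| ≤ |U g z| + |mU| := abs_sub _ _
            _ ≤ 1 / c ^ 2 + 1 / c ^ 2 := add_le_add (hUbd z) hmUbd
            _ = 2 / c ^ 2 := by ring)
        (fun z => by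
          calc |V g z - mV| ≤ |V g z| + |mV| := abs_sub _ _
            _ ≤ 4 / c + 4 / c := add_le_add (hVbd z) hmVbd
            _ = 8 / c := by ring)
        hlam0.le
      refine hch.trans ?_
      have hmsv : mU - mV = s g := hmean g
      have hexp : (N : ℝ) * (-(lam * (mU - mV)) + lam ^ 2 * ((2 / c ^ 2) ^ 2 + (8 / c) ^ 2) / 2)
          ≤ -(L - Real.log 2) := by
        rw [hmsv, ← hRdef]
        have h1 : B ^ 2 / R * B ^ 2 ≤ lam * s g := by
          rw [hlam]
          exact mul_le_mul_of_nonneg_left hsg.le (by positivity)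
        have e : lam ^ 2 * R / 2 = B ^ 2 * B ^ 2 / (2 * R) := by
          rw [hlam]; field_simp
        have e2 : B ^ 2 / R * B ^ 2 = B ^ 2 * B ^ 2 / R := by ring
        have e3 : B ^ 2 * B ^ 2 / R = 2 * (B ^ 2 * B ^ 2 / (2 * R)) := by
          field_simp
        have h2 : -(lam * s g) + lam ^ 2 * R / 2 ≤ -(B ^ 2 * B ^ 2 / (2 * R)) := by
          rw [e]
          rw [e2, e3] at h1
          linarith
        have h3 : (N:ℝ) * (-(lam * s g) + lam ^ 2 * R / 2) ≤
            (N:ℝ) * (-(B ^ 2 * B ^ 2 / (2 * R))) :=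
          mul_le_mul_of_nonneg_left h2 hN0.le
        refine h3.trans ?_
        have hNB4 : (N:ℝ) * (B ^ 2 * B ^ 2) = 16 / c ^ 4 * L ^ 2 := by
          rw [hB2]
          have e4 : 4 / c ^ 2 * L * t ^ 2 * (4 / c ^ 2 * L * t ^ 2)
              = 16 / c ^ 4 * L ^ 2 * (t ^ 2) ^ 2 := by ring
          rw [e4]
          calc (N:ℝ) * (16 / c ^ 4 * L ^ 2 * (t ^ 2) ^ 2)
              = 16 / c ^ 4 * L ^ 2 * ((N:ℝ) * (t ^ 2) ^ 2) := by ring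
            _ = 16 / c ^ 4 * L ^ 2 := by rw [ht4, mul_one]
        have e5 : (N:ℝ) * (-(B ^ 2 * B ^ 2 / (2 * R)))
            = -((N:ℝ) * (B ^ 2 * B ^ 2) / (2 * R)) := by ring
        rw [e5, hNB4]
        have hc4R : c ^ 4 * R = 4 + 64 * c ^ 2 := by
          rw [hRdef]
          field_simp
          ring
        have hc4 : (0:ℝ) < c ^ 4 := by positivity
        have hcR0 : (0:ℝ) < c ^ 4 * R := by positivity
        have hRle : c ^ 4 * R ≤ 20 := by
          rw [hc4R]
          have hcc : c ^ 2 ≤ 1 / 4 := by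
            have h23 := mul_le_mul hc12 hc12 hc0.le (by norm_num : (0:ℝ) ≤ 1 / 2)
            calc c ^ 2 = c * c := sq c
              _ ≤ 1 / 2 * (1 / 2) := h23
              _ = 1 / 4 := by norm_num
          linarith
        have h5 : 16 / c ^ 4 * L ^ 2 / (2 * R) = 8 * L ^ 2 / (c ^ 4 * R) := by
          field_simp
          ring
        rw [h5]
        have h6 : 8 * L ^ 2 / 20 ≤ 8 * L ^ 2 / (c ^ 4 * R) := by
          gcongr
        have h7 : L - Real.log 2 ≤ 8 * L ^ 2 / 20 := by
          have h24 : (L - 5 / 4) ^ 2 = L ^ 2 - 5 / 2 * L + 25 / 16 := by ring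
          linarith [sq_nonneg (L - 5 / 4)]
        linarith
      calc Real.exp ((N : ℝ) *
            (-(lam * (mU - mV)) + lam ^ 2 * ((2 / c ^ 2) ^ 2 + (8 / c) ^ 2) / 2))
          ≤ Real.exp (-(L - Real.log 2)) := Real.exp_le_exp.mpr hexp
        _ = δ / G.card := by
            rw [neg_sub, Real.exp_sub, Real.exp_log two_pos, hL,
              Real.exp_log (by positivity)]
            field_simp
    -- union bound
    set Gbad : Finset (Z → ℝ) := G.filter (fun g => B ^ 2 < s g) with hGbad
    have hsum1 : ∑ g ∈ Gbad, (∑ ω : (Fin N → Z) × (Fin N → Z),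
        if (∑ i, U g (ω.1 i)) - (∑ i, V g (ω.2 i)) ≤ 0
        then (∏ i, q (ω.1 i)) * (∏ i, p (ω.2 i)) else 0) ≤ δ := by
      calc ∑ g ∈ Gbad, (∑ ω : (Fin N → Z) × (Fin N → Z),
            if (∑ i, U g (ω.1 i)) - (∑ i, V g (ω.2 i)) ≤ 0
            then (∏ i, q (ω.1 i)) * (∏ i, p (ω.2 i)) else 0)
          ≤ ∑ _g ∈ Gbad, δ / G.card := by
            refine Finset.sum_le_sum fun g hg => ?_
            rw [hGbad, Finset.mem_filter] at hg
            exact hPg g hg.1 hg.2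
        _ = (Gbad.card : ℝ) * (δ / G.card) := by
            rw [Finset.sum_const, nsmul_eq_mul]
        _ ≤ (G.card : ℝ) * (δ / G.card) := by
            apply mul_le_mul_of_nonneg_right _ (by positivity)
            exact_mod_cast Finset.card_filter_le G _
        _ = δ := by field_simp
    have hpoint : ∀ ω : (Fin N → Z) × (Fin N → Z),
        (∏ i, q (ω.1 i)) * (∏ i, p (ω.2 i)) -
          (∑ g ∈ Gbad, if (∑ i, U g (ω.1 i)) - (∑ i, V g (ω.2 i)) ≤ 0
            then (∏ i, q (ω.1 i)) * (∏ i, p (ω.2 i)) else 0)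
        ≤ (if (∑ z : Z, q z * |ghat ω z - p z / q z| ≤ B)
            then (∏ i, q (ω.1 i)) * (∏ i, p (ω.2 i)) else 0) := by
      intro ω
      by_cases hcond : (∑ z : Z, q z * |ghat ω z - p z / q z| ≤ B)
      · rw [if_pos hcond]
        have h0 : (0:ℝ) ≤ ∑ g ∈ Gbad, (if (∑ i, U g (ω.1 i)) - (∑ i, V g (ω.2 i)) ≤ 0
            then (∏ i, q (ω.1 i)) * (∏ i, p (ω.2 i)) else 0) := by
          refine Finset.sum_nonneg fun g _ => ?_
          split_ifs
          · exact hw0 ω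
          · exact le_refl 0
        linarith
      · rw [if_neg hcond]
        have hbad : ghat ω ∈ Gbad := by
          rw [hGbad, Finset.mem_filter]
          refine ⟨hghatmem ω, ?_⟩
          by_contra hle
          push_neg at hle
          apply hcond
          rw [hcond_eq ω]
          exact hCS ω hle
        have hsingle := Finset.single_le_sum
          (f := fun g => if (∑ i, U g (ω.1 i)) - (∑ i, V g (ω.2 i)) ≤ 0
            then (∏ i, q (ω.1 i)) * (∏ i, p (ω.2 i)) else 0)
          (fun g _ => by
            split_ifs
            · exact hw0 ω
            · exact le_refl 0) hbad
        rw [if_pos (hTmin ω)] at hsingle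
        linarith
    calc (1:ℝ) - δ
        ≤ (∑ ω : (Fin N → Z) × (Fin N → Z), (∏ i, q (ω.1 i)) * (∏ i, p (ω.2 i))) -
            ∑ g ∈ Gbad, (∑ ω : (Fin N → Z) × (Fin N → Z),
              if (∑ i, U g (ω.1 i)) - (∑ i, V g (ω.2 i)) ≤ 0
              then (∏ i, q (ω.1 i)) * (∏ i, p (ω.2 i)) else 0) := by
          rw [hmass]
          linarith
      _ = ∑ ω : (Fin N → Z) × (Fin N → Z), ((∏ i, q (ω.1 i)) * (∏ i, p (ω.2 i)) -
            ∑ g ∈ Gbad, (if (∑ i, U g (ω.1 i)) - (∑ i, V g (ω.2 i)) ≤ 0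
              then (∏ i, q (ω.1 i)) * (∏ i, p (ω.2 i)) else 0)) := by
          rw [Finset.sum_sub_distrib]
          congr 1
          exact Finset.sum_comm
      _ ≤ _ := Finset.sum_le_sum fun ω _ => hpoint ω
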